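/- Let b ≥ 2 and let (Z_m), (Z'_m) be real sequences with Z_m → Z > 0, and suppose for constants C, ε that |Z - Z_m - (1/(b-1))(Z_m - Z_{m-1})| ≤ C·b^{-2m+ε} and |Z' - Z'_m - (1/(b-1))(Z'_m - Z'_{m-1})| ≤ C·b^{-2m+ε} for all m, and also (Z'_m) is bounded. Then there exists C' > 0 such that for all sufficiently large m, |Z'/Z - Z'_m/Z_m - (1/(b·Z_m - Z_{m-1}))·((Z_{m-1}Z'_m - Z_m Z'_{m-1})/Z_m)| ≤ C'·b^{-2m+ε}. -/

import Mathlib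

/-!
The ratio error is an exact linear combination of the two Richardson residuals: it equals
`Z⁻¹` times the residual of `Z'` minus a coefficient times the residual of `Z`, and that
coefficient converges because `b Zₘ - Zₘ₋₁ → (b - 1) Z ≠ 0`. Both residuals are
`O(b^(-2m+ε))`, so the ratio error is too.
-/

open Filter Topology Asymptotics

/-- The error `L - (x + (x - y) / (b - 1))` of the extrapolated estimate built from two
successive approximations `x`, `y` of `L` with refinement factor `b`. -/
noncomputable def richardsonResidual (b L x y : ℝ) : ℝ := L - x - 1 / (b - 1) * (x - y)

lemma ratio_error_eq_residual_combination {b Z Z' x y x' y' : ℝ} (hb : b ≠ 1) (hZ : Z ≠ 0)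
    (hx : x ≠ 0) (hD : b * x - y ≠ 0) :
    Z' / Z - x' / x - 1 / (b * x - y) * ((y * x' - x * y') / x) =
      Z⁻¹ * richardsonResidual b Z' x' y' -
        ((y * x' - x * y') / ((b * x - y) * x) + x' / x) / Z * richardsonResidual b Z x y := by
  have hb' : b - 1 ≠ 0 := sub_ne_zero.mpr hb
  have hD' : x * b - y ≠ 0 := by rwa [mul_comm]
  unfold richardsonResidual
  field_simp
  ring

theorem ratio_error_isBigO {α : Type*} {l : Filter α} {b Z Z' : ℝ} {x y x' y' g : α → ℝ}
    (hb : b ≠ 1) (hZ : Z ≠ 0) (hx : Tendsto x l (𝓝 Z)) (hy : Tendsto y l (𝓝 Z))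
    (hx' : Tendsto x' l (𝓝 Z')) (hy' : Tendsto y' l (𝓝 Z'))
    (hres : (fun t => richardsonResidual b Z (x t) (y t)) =O[l] g)
    (hres' : (fun t => richardsonResidual b Z' (x' t) (y' t)) =O[l] g) :
    (fun t => Z' / Z - x' t / x t -
      1 / (b * x t - y t) * ((y t * x' t - x t * y' t) / x t)) =O[l] g := by
  have hD : Tendsto (fun t => b * x t - y t) l (𝓝 ((b - 1) * Z)) := by
    convert (hx.const_mul b).sub hy using 2; ring
  have hD0 : (b - 1) * Z ≠ 0 := mul_ne_zero (sub_ne_zero.mpr hb) hZ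
  have hcoef : Tendsto (fun t => ((y t * x' t - x t * y' t) / ((b * x t - y t) * x t)
      + x' t / x t) / Z) l
      (𝓝 (((Z * Z' - Z * Z') / ((b - 1) * Z * Z) + Z' / Z) / Z)) :=
    (((((hy.mul hx').sub (hx.mul hy')).div (hD.mul hx) (mul_ne_zero hD0 hZ)).add
      (hx'.div hx hZ)).div_const Z)
  have hcomb := (hres'.const_mul_left Z⁻¹).sub
    (by simpa only [one_mul] using (hcoef.isBigO_one ℝ).mul hres)
  refine hcomb.congr' ?_ EventuallyEq.rfl
  filter_upwards [hx.eventually_ne hZ, hD.eventually_ne hD0] with t hxt hDt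
  exact (ratio_error_eq_residual_combination hb hZ hxt hDt).symm

theorem stmt_14_general (b : ℝ) (hb : 2 ≤ b) (Z Z' : ℝ) (hZ : 0 < Z)
    (Zs Zs' : ℕ → ℝ) (hZs : Tendsto Zs atTop (𝓝 Z))
    (hZs' : Tendsto Zs' atTop (𝓝 Z'))
    (C ε : ℝ)
    (h1 : ∀ m : ℕ, |Z - Zs m - (1 / (b - 1)) * (Zs m - Zs (m - 1))| ≤
      C * b ^ (-(2 : ℝ) * m + ε))
    (h2 : ∀ m : ℕ, |Z' - Zs' m - (1 / (b - 1)) * (Zs' m - Zs' (m - 1))| ≤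
      C * b ^ (-(2 : ℝ) * m + ε)) :
    ∃ C' > (0 : ℝ), ∀ᶠ m in atTop,
      |Z' / Z - Zs' m / Zs m -
          (1 / (b * Zs m - Zs (m - 1))) *
            ((Zs (m - 1) * Zs' m - Zs m * Zs' (m - 1)) / Zs m)| ≤
        C' * b ^ (-(2 : ℝ) * m + ε) := by
  have hpow : ∀ m : ℕ, ‖b ^ (-(2 : ℝ) * m + ε)‖ = b ^ (-(2 : ℝ) * m + ε) := fun m =>
    Real.norm_of_nonneg (Real.rpow_nonneg (by linarith) _)
  have hres : (fun m : ℕ => richardsonResidual b Z (Zs m) (Zs (m - 1))) =O[atTop]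
      fun m : ℕ => b ^ (-(2 : ℝ) * m + ε) :=
    .of_bound C (.of_forall fun m => by rw [Real.norm_eq_abs, hpow]; exact h1 m)
  have hres' : (fun m : ℕ => richardsonResidual b Z' (Zs' m) (Zs' (m - 1))) =O[atTop]
      fun m : ℕ => b ^ (-(2 : ℝ) * m + ε) :=
    .of_bound C (.of_forall fun m => by rw [Real.norm_eq_abs, hpow]; exact h2 m)
  obtain ⟨C', hC', hbound⟩ := (ratio_error_isBigO (by linarith) hZ.ne' hZs
    (hZs.comp (tendsto_sub_atTop_nat 1)) hZs' (hZs'.comp (tendsto_sub_atTop_nat 1))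
    hres hres').exists_pos
  refine ⟨C', hC', ?_⟩
  filter_upwards [hbound.bound] with m hm
  rwa [hpow, Real.norm_eq_abs] at hm

theorem stmt_14 (b : ℝ) (hb : 2 ≤ b) (Z Z' : ℝ) (hZ : 0 < Z)
    (Zs Zs' : ℕ → ℝ) (hZs : Tendsto Zs atTop (𝓝 Z))
    (hZs' : Tendsto Zs' atTop (𝓝 Z'))
    (C ε : ℝ)
    (h1 : ∀ m : ℕ, |Z - Zs m - (1 / (b - 1)) * (Zs m - Zs (m - 1))| ≤
      C * b ^ (-(2 : ℝ) * m + ε))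
    (h2 : ∀ m : ℕ, |Z' - Zs' m - (1 / (b - 1)) * (Zs' m - Zs' (m - 1))| ≤
      C * b ^ (-(2 : ℝ) * m + ε))
    (hbd : ∃ M, ∀ m, |Zs' m| ≤ M) :
    ∃ C' > (0 : ℝ), ∀ᶠ m in atTop,
      |Z' / Z - Zs' m / Zs m -
          (1 / (b * Zs m - Zs (m - 1))) *
            ((Zs (m - 1) * Zs' m - Zs m * Zs' (m - 1)) / Zs m)| ≤
        C' * b ^ (-(2 : ℝ) * m + ε) :=
  stmt_14_general b hb Z Z' hZ Zs Zs' hZs hZs' C ε h1 h2
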